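/- arXiv:math/0611058 — 4 statements merged into one kernel-verified Lean document; each statement's English description precedes it below -/
import Mathlib

section
/- Let n ≥ 2. The function g : ℝ → ℝ defined below is bounded on ℝ, is of class C² on ℝ and C^∞ on ℝ \ {0}, tends to 0 as t → +∞, satisfies the ordinary differential equation g'''' + 2n g''' + (n² − 2) g'' − 2n g' = 0 at every t ≠ 0, and its third derivative has a jump of size one at the origin: lim_{t→0⁺} g'''(t) − lim_{t→0⁻} g'''(t) = 1. (Equivalently, g is a bounded solution of g'''' + 2n g''' + (n² − 2) g'' − 2n g' = δ₀ in the distributional sense with g(t) → 0 as t → +∞.) -/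
open MeasureTheory Metric Set Filter
open scoped Topology RealInnerProductSpace NNReal ENNReal

noncomputable section

/-- `ℝⁿ` with the Euclidean structure. -/
abbrev Euc (n : ℕ) := EuclideanSpace ℝ (Fin n)

/-- Pointwise Laplacian of `u : ℝⁿ → ℝ`. -/
def lap {n : ℕ} (u : Euc n → ℝ) (x : Euc n) : ℝ :=
  ∑ i : Fin n, fderiv ℝ (fun y => fderiv ℝ u y (EuclideanSpace.single i 1)) x
    (EuclideanSpace.single i 1)

/-- The fundamental solution `g` from Lemma 3.2 of the paper:
`g(t) = −(1/(2n√(n²+8)))·(n e^{−(1/2)(n−√(n²+8))t} − √(n²+8))` for `t < 0` and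
`g(t) = −(1/(2n√(n²+8)))·(n e^{−(1/2)(n+√(n²+8))t} − √(n²+8) e^{−nt})` for `t ≥ 0`. -/
def gfun (n : ℕ) (t : ℝ) : ℝ :=
  if t < 0 then
    -(1 / (2 * (n : ℝ) * Real.sqrt ((n : ℝ) ^ 2 + 8))) *
      ((n : ℝ) * Real.exp (-(1 / 2) * ((n : ℝ) - Real.sqrt ((n : ℝ) ^ 2 + 8)) * t)
        - Real.sqrt ((n : ℝ) ^ 2 + 8))
  else
    -(1 / (2 * (n : ℝ) * Real.sqrt ((n : ℝ) ^ 2 + 8))) *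
      ((n : ℝ) * Real.exp (-(1 / 2) * ((n : ℝ) + Real.sqrt ((n : ℝ) ^ 2 + 8)) * t)
        - Real.sqrt ((n : ℝ) ^ 2 + 8) * Real.exp (-(n : ℝ) * t))

namespace GfunAux

/-- A two-exponential function. -/
def qf (K1 a K2 b : ℝ) : ℝ → ℝ := fun t => K1 * Real.exp (a * t) + K2 * Real.exp (b * t)

lemma qf_hasDerivAt (K1 a K2 b t : ℝ) :
    HasDerivAt (qf K1 a K2 b) (qf (a * K1) a (b * K2) b t) t := by
  have h1 : HasDerivAt (fun t : ℝ => a * t) a t := by simpa using (hasDerivAt_id t).const_mul a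
  have h2 : HasDerivAt (fun t : ℝ => b * t) b t := by simpa using (hasDerivAt_id t).const_mul b
  have := (h1.exp.const_mul K1).add (h2.exp.const_mul K2)
  convert this using 1
  · rfl
  · rfl
  · rfl
  · simp only [qf]; ring

lemma qf_continuous (K1 a K2 b : ℝ) : Continuous (qf K1 a K2 b) := by
  unfold qf; fun_prop

lemma qf_contDiff (K1 a K2 b : ℝ) : ContDiff ℝ (⊤ : ℕ∞) (qf K1 a K2 b) := by
  unfold qf
  exact (contDiff_const.mul ((contDiff_const.mul contDiff_id).exp)).add
    (contDiff_const.mul ((contDiff_const.mul contDiff_id).exp))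

lemma qf_bound {K1 a K2 b t : ℝ} (h1 : a * t ≤ 0) (h2 : b * t ≤ 0) :
    |qf K1 a K2 b t| ≤ |K1| + |K2| := by
  unfold qf
  calc |K1 * Real.exp (a * t) + K2 * Real.exp (b * t)|
      ≤ |K1 * Real.exp (a * t)| + |K2 * Real.exp (b * t)| := abs_add_le _ _
    _ = |K1| * Real.exp (a * t) + |K2| * Real.exp (b * t) := by
        rw [abs_mul, abs_mul, abs_of_pos (Real.exp_pos _), abs_of_pos (Real.exp_pos _)]
    _ ≤ |K1| * 1 + |K2| * 1 := by
        gcongr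
        · exact Real.exp_le_one_iff.2 h1
        · exact Real.exp_le_one_iff.2 h2
    _ = |K1| + |K2| := by ring

lemma qf_tendsto_zero {K1 a K2 b : ℝ} (ha : a < 0) (hb : b < 0) :
    Tendsto (qf K1 a K2 b) atTop (𝓝 0) := by
  have h1 : Tendsto (fun t : ℝ => a * t) atTop atBot :=
    (tendsto_const_mul_atBot_of_neg ha).2 tendsto_id
  have h2 : Tendsto (fun t : ℝ => b * t) atTop atBot :=
    (tendsto_const_mul_atBot_of_neg hb).2 tendsto_id
  have e1 : Tendsto (fun t : ℝ => K1 * Real.exp (a * t)) atTop (𝓝 (K1 * 0)) :=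
    (Real.tendsto_exp_atBot.comp h1).const_mul K1
  have e2 : Tendsto (fun t : ℝ => K2 * Real.exp (b * t)) atTop (𝓝 (K2 * 0)) :=
    (Real.tendsto_exp_atBot.comp h2).const_mul K2
  have := e1.add e2
  unfold qf; simpa using this

/-- Ladder of derivatives of `qf`. -/
def L (K1 a K2 b : ℝ) (k : ℕ) : ℝ → ℝ := qf (a ^ k * K1) a (b ^ k * K2) b

lemma L_hasDerivAt (K1 a K2 b : ℝ) (k : ℕ) (t : ℝ) :
    HasDerivAt (L K1 a K2 b k) (L K1 a K2 b (k + 1) t) t := by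
  have := qf_hasDerivAt (a ^ k * K1) a (b ^ k * K2) b t
  convert this using 1
  · rfl
  simp only [L, qf]; ring

/-- Glue two functions at 0. -/
def gp (f h : ℝ → ℝ) : ℝ → ℝ := fun t => if t < 0 then f t else h t

lemma gp_eventuallyEq_left {f h : ℝ → ℝ} {t : ℝ} (ht : t < 0) : gp f h =ᶠ[𝓝 t] f := by
  filter_upwards [eventually_lt_nhds ht] with x hx
  simp [gp, hx]

lemma gp_eventuallyEq_right {f h : ℝ → ℝ} {t : ℝ} (ht : 0 < t) : gp f h =ᶠ[𝓝 t] h := by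
  filter_upwards [eventually_gt_nhds ht] with x hx
  simp [gp, not_lt.2 hx.le]

lemma gp_hasDerivAt_ne {f h f' h' : ℝ → ℝ} (hf : ∀ t, HasDerivAt f (f' t) t)
    (hh : ∀ t, HasDerivAt h (h' t) t) {t : ℝ} (ht : t ≠ 0) :
    HasDerivAt (gp f h) (gp f' h' t) t := by
  rcases ht.lt_or_gt with h1 | h1
  · have : gp f' h' t = f' t := by simp [gp, h1]
    rw [this]
    exact (hf t).congr_of_eventuallyEq (gp_eventuallyEq_left h1)
  · have : gp f' h' t = h' t := by simp [gp, not_lt.2 h1.le]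
    rw [this]
    exact (hh t).congr_of_eventuallyEq (gp_eventuallyEq_right h1)

lemma gp_hasDerivAt {f h f' h' : ℝ → ℝ} (hf : ∀ t, HasDerivAt f (f' t) t)
    (hh : ∀ t, HasDerivAt h (h' t) t) (e0 : f 0 = h 0) (e1 : f' 0 = h' 0) (t : ℝ) :
    HasDerivAt (gp f h) (gp f' h' t) t := by
  rcases eq_or_ne t 0 with rfl | ht
  · have hval : gp f' h' 0 = h' 0 := by simp [gp]
    rw [hval]
    have hleft : HasDerivWithinAt (gp f h) (h' 0) (Iic 0) 0 := by
      rw [← e1]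
      refine ((hf 0).hasDerivWithinAt).congr (fun y hy => ?_) (by simp [gp, e0])
      rcases lt_or_eq_of_le (mem_Iic.1 hy) with h1 | h1
      · simp [gp, h1]
      · subst h1; simp [gp, e0]
    have hright : HasDerivWithinAt (gp f h) (h' 0) (Ici 0) 0 := by
      refine ((hh 0).hasDerivWithinAt).congr (fun y hy => ?_) (by simp [gp])
      simp [gp, not_lt.2 (mem_Ici.1 hy)]
    have := hleft.union hright
    rw [Iic_union_Ici] at this
    rwa [hasDerivWithinAt_univ] at this
  · exact gp_hasDerivAt_ne hf hh ht

lemma gp_continuous {f h : ℝ → ℝ} (hf : Continuous f) (hh : Continuous h) (e0 : f 0 = h 0) :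
    Continuous (gp f h) := by
  have : gp f h = fun t => if (0 : ℝ) ≤ t then h t else f t := by
    funext t
    rcases lt_or_ge t 0 with h1 | h1
    · simp [gp, h1, not_le.2 h1]
    · simp [gp, not_lt.2 h1, h1]
  rw [this]
  exact hh.if_le hf continuous_const continuous_id fun x hx => (hx ▸ e0).symm

end GfunAux

open GfunAux in
/-- **Lemma 3.2**: `g` is a bounded solution of
`g'''' + 2n g''' + (n² − 2) g'' − 2n g' = δ₀` with `g(t) → 0` as `t → +∞`:
it is bounded, `C²` on `ℝ`, `C^∞` away from `0`, tends to `0` at `+∞`, satisfies the ODE on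
`ℝ \ {0}`, and `g'''` jumps by `1` at the origin. -/
theorem gfun_fundamental_solution (n : ℕ) (hn : 2 ≤ n) :
    (∃ M : ℝ, ∀ t : ℝ, |gfun n t| ≤ M) ∧
    ContDiff ℝ 2 (gfun n) ∧
    ContDiffOn ℝ (⊤ : ℕ∞) (gfun n) {(0 : ℝ)}ᶜ ∧
    Tendsto (gfun n) atTop (𝓝 0) ∧
    (∀ t : ℝ, t ≠ 0 →
      iteratedDeriv 4 (gfun n) t + 2 * (n : ℝ) * iteratedDeriv 3 (gfun n) t
        + ((n : ℝ) ^ 2 - 2) * iteratedDeriv 2 (gfun n) t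
        - 2 * (n : ℝ) * deriv (gfun n) t = 0) ∧
    (∃ a b : ℝ, Tendsto (iteratedDeriv 3 (gfun n)) (𝓝[>] (0 : ℝ)) (𝓝 a) ∧
      Tendsto (iteratedDeriv 3 (gfun n)) (𝓝[<] (0 : ℝ)) (𝓝 b) ∧ a - b = 1) := by
  have hn2 : (2 : ℝ) ≤ (n : ℝ) := by exact_mod_cast hn
  have hnpos : (0 : ℝ) < (n : ℝ) := by linarith
  set s : ℝ := Real.sqrt ((n : ℝ) ^ 2 + 8) with hsdef
  have hs2 : s ^ 2 = (n : ℝ) ^ 2 + 8 := Real.sq_sqrt (by positivity)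
  have hs0 : (0 : ℝ) < s := by rw [hsdef]; positivity
  have hsn : (n : ℝ) < s := by nlinarith
  set c : ℝ := -(1 / (2 * (n : ℝ) * s)) with hcdef
  set a1 : ℝ := -(1 / 2) * ((n : ℝ) - s) with ha1
  set a2 : ℝ := -(1 / 2) * ((n : ℝ) + s) with ha2
  set F1 : ℕ → ℝ → ℝ := GfunAux.L (c * (n : ℝ)) a1 (-(c * s)) 0 with hF1
  set F2 : ℕ → ℝ → ℝ := GfunAux.L (c * (n : ℝ)) a2 (-(c * s)) (-(n : ℝ)) with hF2
  set G : ℕ → ℝ → ℝ := fun k => GfunAux.gp (F1 k) (F2 k) with hG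
  have hg : gfun n = G 0 := by
    funext t
    simp only [hG, hF1, hF2, GfunAux.gp, GfunAux.L, GfunAux.qf, gfun, ← hsdef, ← hcdef,
      ← ha1, ← ha2]
    split_ifs with h
    · simp only [pow_zero, one_mul, mul_zero, zero_mul, Real.exp_zero, mul_one]
      try ring
    · try ring
  -- matching conditions
  have m0 : F1 0 0 = F2 0 0 := by
    simp only [hF1, hF2, GfunAux.L, GfunAux.qf, mul_zero, Real.exp_zero, pow_zero]
    try ring
  have m1 : F1 1 0 = F2 1 0 := by
    simp only [hF1, hF2, GfunAux.L, GfunAux.qf, mul_zero, Real.exp_zero, pow_one]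
    rw [ha1, ha2]; ring
  have m2 : F1 2 0 = F2 2 0 := by
    simp only [hF1, hF2, GfunAux.L, GfunAux.qf, mul_zero, Real.exp_zero]
    rw [ha1, ha2]; ring
  -- derivative ladders
  have hF1d : ∀ k t, HasDerivAt (F1 k) (F1 (k + 1) t) t := by
    intro k t; rw [hF1]; exact GfunAux.L_hasDerivAt _ _ _ _ k t
  have hF2d : ∀ k t, HasDerivAt (F2 k) (F2 (k + 1) t) t := by
    intro k t; rw [hF2]; exact GfunAux.L_hasDerivAt _ _ _ _ k t
  have hGd : ∀ t, HasDerivAt (G 0) (G 1 t) t :=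
    GfunAux.gp_hasDerivAt (hF1d 0) (hF2d 0) m0 m1
  have hGd1 : ∀ t, HasDerivAt (G 1) (G 2 t) t :=
    GfunAux.gp_hasDerivAt (hF1d 1) (hF2d 1) m1 m2
  have hGd2 : ∀ t, t ≠ 0 → HasDerivAt (G 2) (G 3 t) t := fun t ht =>
    GfunAux.gp_hasDerivAt_ne (hF1d 2) (hF2d 2) ht
  have hGd3 : ∀ t, t ≠ 0 → HasDerivAt (G 3) (G 4 t) t := fun t ht =>
    GfunAux.gp_hasDerivAt_ne (hF1d 3) (hF2d 3) ht
  have hderiv : deriv (gfun n) = G 1 := by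
    rw [hg]; exact funext fun t => (hGd t).deriv
  have hderiv1 : deriv (G 1) = G 2 := funext fun t => (hGd1 t).deriv
  have it2 : iteratedDeriv 2 (gfun n) = G 2 := by
    rw [show (2 : ℕ) = 1 + 1 from rfl, iteratedDeriv_succ, iteratedDeriv_one, hderiv, hderiv1]
  have it3 : ∀ t, t ≠ 0 → iteratedDeriv 3 (gfun n) t = G 3 t := by
    intro t ht
    rw [show (3 : ℕ) = 2 + 1 from rfl, iteratedDeriv_succ, it2]
    exact (hGd2 t ht).deriv
  have it4 : ∀ t, t ≠ 0 → iteratedDeriv 4 (gfun n) t = G 4 t := by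
    intro t ht
    have hev : iteratedDeriv 3 (gfun n) =ᶠ[𝓝 t] G 3 :=
      (eventually_ne_nhds ht).mono fun y hy => it3 y hy
    rw [show (4 : ℕ) = 3 + 1 from rfl, iteratedDeriv_succ, hev.deriv_eq]
    exact (hGd3 t ht).deriv
  -- characteristic roots
  have hchar1 : a1 ^ 4 + 2 * (n : ℝ) * a1 ^ 3 + ((n : ℝ) ^ 2 - 2) * a1 ^ 2
      - 2 * (n : ℝ) * a1 = 0 := by
    have hroot : a1 ^ 2 + (n : ℝ) * a1 - 2 = 0 := by
      rw [ha1]; linear_combination (1 / 4 : ℝ) * hs2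
    linear_combination (a1 ^ 2 + (n : ℝ) * a1) * hroot
  have hchar2 : a2 ^ 4 + 2 * (n : ℝ) * a2 ^ 3 + ((n : ℝ) ^ 2 - 2) * a2 ^ 2
      - 2 * (n : ℝ) * a2 = 0 := by
    have hroot : a2 ^ 2 + (n : ℝ) * a2 - 2 = 0 := by
      rw [ha2]; linear_combination (1 / 4 : ℝ) * hs2
    linear_combination (a2 ^ 2 + (n : ℝ) * a2) * hroot
  refine ⟨?_, ?_, ?_, ?_, ?_, ?_⟩
  · -- boundedness
    refine ⟨|c * (n : ℝ)| + |c * s|, fun t => ?_⟩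
    rw [hg]
    by_cases h : t < 0
    · have : G 0 t = F1 0 t := by simp [hG, GfunAux.gp, h]
      rw [this, hF1]
      have ha1pos : 0 ≤ a1 := by rw [ha1]; linarith
      have h1 : a1 * t ≤ 0 := mul_nonpos_of_nonneg_of_nonpos ha1pos h.le
      have := GfunAux.qf_bound (K1 := a1 ^ 0 * (c * (n : ℝ))) (K2 := (0 : ℝ) ^ 0 * (-(c * s)))
        h1 (by rw [zero_mul])
      simpa [GfunAux.L, abs_neg] using this
    · have h' : 0 ≤ t := not_lt.1 h
      have : G 0 t = F2 0 t := by simp [hG, GfunAux.gp, h]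
      rw [this, hF2]
      have ha2neg : a2 ≤ 0 := by rw [ha2]; nlinarith
      have h1 : a2 * t ≤ 0 := mul_nonpos_of_nonpos_of_nonneg ha2neg h'
      have h2 : -(n : ℝ) * t ≤ 0 := mul_nonpos_of_nonpos_of_nonneg (by linarith) h'
      have := GfunAux.qf_bound (K1 := a2 ^ 0 * (c * (n : ℝ)))
        (K2 := (-(n : ℝ)) ^ 0 * (-(c * s))) h1 h2
      simpa [GfunAux.L, abs_neg] using this
  · -- C²
    rw [show (2 : WithTop ℕ∞) = 1 + 1 from rfl]
    refine contDiff_succ_iff_deriv.2 ⟨?_, ?_, ?_⟩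
    · rw [hg]; exact fun t => (hGd t).differentiableAt
    · intro h; simp at h
    · rw [hderiv]
      refine contDiff_one_iff_deriv.2 ⟨fun t => (hGd1 t).differentiableAt, ?_⟩
      rw [hderiv1, hG]
      exact GfunAux.gp_continuous (by rw [hF1]; exact GfunAux.qf_continuous _ _ _ _)
        (by rw [hF2]; exact GfunAux.qf_continuous _ _ _ _) m2
  · -- C^∞ away from 0
    intro x hx
    have hx0 : x ≠ 0 := hx
    have hca : ContDiffAt ℝ (⊤ : ℕ∞) (gfun n) x := by
      rw [hg]
      rcases hx0.lt_or_gt with h | h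
      · exact ((by rw [hF1]; exact GfunAux.qf_contDiff _ _ _ _ :
          ContDiff ℝ (⊤ : ℕ∞) (F1 0)).contDiffAt).congr_of_eventuallyEq
          (GfunAux.gp_eventuallyEq_left h)
      · exact ((by rw [hF2]; exact GfunAux.qf_contDiff _ _ _ _ :
          ContDiff ℝ (⊤ : ℕ∞) (F2 0)).contDiffAt).congr_of_eventuallyEq
          (GfunAux.gp_eventuallyEq_right h)
    exact hca.contDiffWithinAt
  · -- tendsto atTop
    have hev : gfun n =ᶠ[atTop] F2 0 := by
      rw [hg]
      filter_upwards [eventually_gt_atTop (0 : ℝ)] with t ht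
      simp [hG, GfunAux.gp, not_lt.2 ht.le]
    have ha2neg : a2 < 0 := by rw [ha2]; nlinarith
    have := (by rw [hF2]; exact GfunAux.qf_tendsto_zero ha2neg (by linarith) :
      Tendsto (F2 0) atTop (𝓝 0))
    exact Tendsto.congr' hev.symm this
  · -- ODE
    intro t ht
    rw [it4 t ht, it3 t ht, it2, hderiv]
    rcases ht.lt_or_gt with h | h
    · simp only [hG, GfunAux.gp, if_pos h, hF1, GfunAux.L, GfunAux.qf]
      linear_combination (c * (n : ℝ) * Real.exp (a1 * t)) * hchar1
    · simp only [hG, GfunAux.gp, if_neg (not_lt.2 h.le), hF2, GfunAux.L, GfunAux.qf]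
      linear_combination (c * (n : ℝ) * Real.exp (a2 * t)) * hchar2
  · -- jump
    refine ⟨F2 3 0, F1 3 0, ?_, ?_, ?_⟩
    · have cont2 : Continuous (F2 3) := by rw [hF2]; exact GfunAux.qf_continuous _ _ _ _
      refine Tendsto.congr' ?_ ((cont2.tendsto 0).mono_left nhdsWithin_le_nhds)
      filter_upwards [self_mem_nhdsWithin] with x hx
      rw [it3 x (ne_of_gt hx)]
      simp [hG, GfunAux.gp, not_lt.2 (le_of_lt (mem_Ioi.1 hx))]
    · have cont1 : Continuous (F1 3) := by rw [hF1]; exact GfunAux.qf_continuous _ _ _ _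
      refine Tendsto.congr' ?_ ((cont1.tendsto 0).mono_left nhdsWithin_le_nhds)
      filter_upwards [self_mem_nhdsWithin] with x hx
      rw [it3 x (ne_of_lt hx)]
      simp [hG, GfunAux.gp, mem_Iio.1 hx]
    · simp only [hF1, hF2, GfunAux.L, GfunAux.qf, mul_zero, Real.exp_zero]
      rw [ha1, ha2, hcdef]
      field_simp
      ring_nf
      linear_combination (2 * (n : ℝ) * s) * hs2
end
end

section
/- Let n ≥ 2 and let g be the function defined below. Then g(t) ≥ 0 for all t ∈ ℝ and g'(t) ≤ 0 for all t ∈ ℝ \ {0} (with the one-sided derivatives at 0 also nonpositive); in particular g is nonnegative and nonincreasing on ℝ. -/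
open MeasureTheory Metric Set Filter
open scoped Topology RealInnerProductSpace NNReal ENNReal

noncomputable section

/-- Left branch of `gfun`. -/
def g1 (n : ℕ) (t : ℝ) : ℝ :=
  -(1 / (2 * (n : ℝ) * Real.sqrt ((n : ℝ) ^ 2 + 8))) *
      ((n : ℝ) * Real.exp (-(1 / 2) * ((n : ℝ) - Real.sqrt ((n : ℝ) ^ 2 + 8)) * t)
        - Real.sqrt ((n : ℝ) ^ 2 + 8))

/-- Right branch of `gfun`. -/
def g2 (n : ℕ) (t : ℝ) : ℝ :=
  -(1 / (2 * (n : ℝ) * Real.sqrt ((n : ℝ) ^ 2 + 8))) *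
      ((n : ℝ) * Real.exp (-(1 / 2) * ((n : ℝ) + Real.sqrt ((n : ℝ) ^ 2 + 8)) * t)
        - Real.sqrt ((n : ℝ) ^ 2 + 8) * Real.exp (-(n : ℝ) * t))

lemma gfun_eq (n : ℕ) (t : ℝ) : gfun n t = if t < 0 then g1 n t else g2 n t := rfl

lemma hasDerivAt_exp_mul (k t : ℝ) :
    HasDerivAt (fun x => Real.exp (k * x)) (k * Real.exp (k * t)) t := by
  simpa [mul_comm] using ((hasDerivAt_id t).const_mul k).exp

lemma hasDerivAt_g1 (n : ℕ) (t : ℝ) :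
    HasDerivAt (g1 n)
      (-(1 / (2 * (n : ℝ) * Real.sqrt ((n : ℝ) ^ 2 + 8))) *
        ((n : ℝ) * ((-(1 / 2) * ((n : ℝ) - Real.sqrt ((n : ℝ) ^ 2 + 8))) *
          Real.exp (-(1 / 2) * ((n : ℝ) - Real.sqrt ((n : ℝ) ^ 2 + 8)) * t)))) t := by
  exact (((hasDerivAt_exp_mul _ t).const_mul (n : ℝ)).sub_const _).const_mul _

lemma hasDerivAt_g2 (n : ℕ) (t : ℝ) :
    HasDerivAt (g2 n)
      (-(1 / (2 * (n : ℝ) * Real.sqrt ((n : ℝ) ^ 2 + 8))) *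
        ((n : ℝ) * ((-(1 / 2) * ((n : ℝ) + Real.sqrt ((n : ℝ) ^ 2 + 8))) *
          Real.exp (-(1 / 2) * ((n : ℝ) + Real.sqrt ((n : ℝ) ^ 2 + 8)) * t))
        - Real.sqrt ((n : ℝ) ^ 2 + 8) * ((-(n : ℝ)) * Real.exp (-(n : ℝ) * t)))) t := by
  exact (((hasDerivAt_exp_mul _ t).const_mul (n : ℝ)).sub
    ((hasDerivAt_exp_mul _ t).const_mul _)).const_mul _

/-- `g ≥ 0` on `ℝ` and `g' ≤ 0` away from the origin (with nonpositive one-sided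
derivatives at `0`); in particular `g` is nonnegative and nonincreasing. -/
theorem gfun_nonneg_antitone (n : ℕ) (hn : 2 ≤ n) :
    (∀ t : ℝ, 0 ≤ gfun n t) ∧
    (∀ t : ℝ, t ≠ 0 → deriv (gfun n) t ≤ 0) ∧
    derivWithin (gfun n) (Set.Iic 0) 0 ≤ 0 ∧
    derivWithin (gfun n) (Set.Ici 0) 0 ≤ 0 ∧
    Antitone (gfun n) := by
  have hn2 : (2 : ℝ) ≤ (n : ℝ) := by exact_mod_cast hn
  have hn0 : (0 : ℝ) < (n : ℝ) := by linarith
  set s : ℝ := Real.sqrt ((n : ℝ) ^ 2 + 8) with hs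
  have hs0 : 0 < s := Real.sqrt_pos.mpr (by positivity)
  have hns : (n : ℝ) < s := by
    rw [hs]
    rw [show ((n : ℝ) ^ 2 + 8) = (n : ℝ) ^ 2 + 8 from rfl]
    have := (Real.lt_sqrt hn0.le (y := (n : ℝ) ^ 2 + 8)).mpr (by linarith)
    exact this
  set c : ℝ := 1 / (2 * (n : ℝ) * s) with hc
  have hc0 : 0 < c := by positivity
  -- the two branch derivatives
  set d1 : ℝ → ℝ := fun t =>
    -c * ((n : ℝ) * ((-(1 / 2) * ((n : ℝ) - s)) * Real.exp (-(1 / 2) * ((n : ℝ) - s) * t)))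
    with hd1
  set d2 : ℝ → ℝ := fun t =>
    -c * ((n : ℝ) * ((-(1 / 2) * ((n : ℝ) + s)) * Real.exp (-(1 / 2) * ((n : ℝ) + s) * t))
      - s * ((-(n : ℝ)) * Real.exp (-(n : ℝ) * t))) with hd2
  have hD1 : ∀ t, HasDerivAt (g1 n) (d1 t) t := fun t => hasDerivAt_g1 n t
  have hD2 : ∀ t, HasDerivAt (g2 n) (d2 t) t := fun t => hasDerivAt_g2 n t
  -- sign of d1
  have hd1neg : ∀ t : ℝ, d1 t ≤ 0 := by
    intro t
    have hk : (0:ℝ) < -(1 / 2) * ((n : ℝ) - s) := by linarith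
    have hY : 0 ≤ (n : ℝ) * ((-(1 / 2) * ((n : ℝ) - s)) *
        Real.exp (-(1 / 2) * ((n : ℝ) - s) * t)) :=
      mul_nonneg hn0.le (mul_nonneg hk.le (Real.exp_pos _).le)
    simp only [hd1]
    rw [neg_mul, neg_nonpos]
    exact mul_nonneg hc0.le hY
  -- sign of d2 for t ≥ 0
  have hd2neg : ∀ t : ℝ, 0 ≤ t → d2 t ≤ 0 := by
    intro t ht
    have hble : -(1 / 2) * ((n : ℝ) + s) * t ≤ -(n : ℝ) * t := by nlinarith
    have he1 : Real.exp (-(1 / 2) * ((n : ℝ) + s) * t) ≤ Real.exp (-(n : ℝ) * t) :=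
      Real.exp_le_exp.mpr hble
    have he2 : 0 < Real.exp (-(1 / 2) * ((n : ℝ) + s) * t) := Real.exp_pos _
    have he3 : 0 < Real.exp (-(n : ℝ) * t) := Real.exp_pos _
    simp only [hd2]
    rw [neg_mul, neg_nonpos]
    apply mul_nonneg hc0.le
    have h1 : 0 ≤ (s - (n:ℝ)) * (n:ℝ) * Real.exp (-(1 / 2) * ((n : ℝ) + s) * t) :=
      mul_nonneg (mul_nonneg (sub_nonneg.mpr hns.le) hn0.le) he2.le
    have h2 : (n:ℝ) * s * Real.exp (-(1 / 2) * ((n : ℝ) + s) * t)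
        ≤ (n:ℝ) * s * Real.exp (-(n : ℝ) * t) :=
      mul_le_mul_of_nonneg_left he1 (mul_nonneg hn0.le hs0.le)
    nlinarith [h1, h2]
  -- equality of derivatives at 0
  have hd10 : d1 0 = d2 0 := by
    simp only [hd1, hd2, mul_zero, Real.exp_zero, mul_one]
    ring
  -- EqOn facts
  have hIio : ∀ x : ℝ, x < 0 → gfun n x = g1 n x := by
    intro x hx; rw [gfun_eq, if_pos hx]
  have hIci : Set.EqOn (gfun n) (g2 n) (Set.Ici 0) := by
    intro x hx; rw [gfun_eq, if_neg (not_lt.mpr hx)]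
  have hIic : Set.EqOn (gfun n) (g1 n) (Set.Iic 0) := by
    intro x hx
    rcases (Set.mem_Iic.mp hx).lt_or_eq with h | h
    · exact hIio x h
    · subst h
      rw [gfun_eq, if_neg (lt_irrefl 0)]
      simp [g1, g2, ← hs]
  -- HasDerivAt of gfun everywhere
  have hDg : ∀ t : ℝ, HasDerivAt (gfun n) (if t < 0 then d1 t else d2 t) t := by
    intro t
    rcases lt_trichotomy t 0 with ht | ht | ht
    · rw [if_pos ht]
      refine (hD1 t).congr_of_eventuallyEq ?_
      filter_upwards [Iio_mem_nhds ht] with x hx using hIio x hx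
    · subst ht
      rw [if_neg (lt_irrefl 0)]
      have hleft : HasDerivWithinAt (gfun n) (d2 0) (Set.Iic 0) 0 := by
        have := ((hD1 0).hasDerivWithinAt (s := Set.Iic 0)).congr
          (fun x hx => hIic hx) (hIic (le_refl (0:ℝ)))
        rwa [hd10] at this
      have hright : HasDerivWithinAt (gfun n) (d2 0) (Set.Ici 0) 0 :=
        ((hD2 0).hasDerivWithinAt (s := Set.Ici 0)).congr
          (fun x hx => hIci hx) (hIci (le_refl (0:ℝ)))
      have := hleft.union hright
      rwa [Set.Iic_union_Ici, hasDerivWithinAt_univ] at this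
    · rw [if_neg (not_lt.mpr ht.le)]
      refine (hD2 t).congr_of_eventuallyEq ?_
      filter_upwards [Ioi_mem_nhds ht] with x hx using hIci (Set.mem_Ici.mpr (le_of_lt (Set.mem_Ioi.mp hx)))
  have hderiv_nonpos : ∀ t : ℝ, deriv (gfun n) t ≤ 0 := by
    intro t
    rw [(hDg t).deriv]
    split_ifs with h
    · exact hd1neg t
    · exact hd2neg t (not_lt.mp h)
  have hdiff : Differentiable ℝ (gfun n) := fun t => (hDg t).differentiableAt
  refine ⟨?_, fun t _ => hderiv_nonpos t, ?_, ?_, ?_⟩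
  · -- nonnegativity
    intro t
    rcases lt_or_ge t 0 with ht | ht
    · rw [hIio t ht]
      have he : Real.exp (-(1 / 2) * ((n : ℝ) - s) * t) ≤ 1 := by
        apply Real.exp_le_one_iff.mpr
        nlinarith [mul_nonneg (sub_nonneg.mpr hns.le) (neg_nonneg.mpr ht.le)]
      rw [g1, ← hs, ← hc]
      rw [neg_mul, neg_nonneg]
      refine mul_nonpos_iff.mpr (Or.inl ⟨hc0.le, ?_⟩)
      have hne : (n:ℝ) * Real.exp (-(1 / 2) * ((n : ℝ) - s) * t) ≤ (n:ℝ) :=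
        mul_le_of_le_one_right hn0.le he
      linarith
    · rw [hIci ht]
      have hble : -(1 / 2) * ((n : ℝ) + s) * t ≤ -(n : ℝ) * t := by nlinarith
      have he1 : Real.exp (-(1 / 2) * ((n : ℝ) + s) * t) ≤ Real.exp (-(n : ℝ) * t) :=
        Real.exp_le_exp.mpr hble
      have he3 : 0 < Real.exp (-(n : ℝ) * t) := Real.exp_pos _
      rw [g2, ← hs, ← hc]
      rw [neg_mul, neg_nonneg]
      refine mul_nonpos_iff.mpr (Or.inl ⟨hc0.le, ?_⟩)
      have k1 : (n:ℝ) * Real.exp (-(1 / 2) * ((n : ℝ) + s) * t)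
          ≤ (n:ℝ) * Real.exp (-(n : ℝ) * t) := mul_le_mul_of_nonneg_left he1 hn0.le
      have k2 : (n:ℝ) * Real.exp (-(n : ℝ) * t) ≤ s * Real.exp (-(n : ℝ) * t) :=
        mul_le_mul_of_nonneg_right hns.le he3.le
      linarith
  · rw [(hdiff 0).derivWithin (uniqueDiffOn_Iic (0:ℝ) 0 (Set.mem_Iic.mpr le_rfl))]
    exact hderiv_nonpos 0
  · rw [(hdiff 0).derivWithin (uniqueDiffOn_Ici (0:ℝ) 0 (Set.mem_Ici.mpr le_rfl))]
    exact hderiv_nonpos 0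
  · exact antitone_of_deriv_nonpos hdiff hderiv_nonpos
end
end

section
/- Let n ≥ 2 and let g be the function defined below. Then for every t ∈ ℝ \ {0}, g''(t) + n g'(t) = −(1/√(n²+8)) e^{−(1/2)(n−√(n²+8))t} if t < 0 and g''(t) + n g'(t) = −(1/√(n²+8)) e^{−(1/2)(n+√(n²+8))t} if t > 0; in particular g''(t) + n g'(t) < 0 for all t ≠ 0. -/
open MeasureTheory Metric Set Filter
open scoped Topology RealInnerProductSpace NNReal ENNReal

noncomputable section

lemma hasDerivAt_expcombo (A a B b x : ℝ) :
    HasDerivAt (fun x => A * Real.exp (a*x) + B * Real.exp (b*x))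
      (A*a * Real.exp (a*x) + B*b * Real.exp (b*x)) x := by
  have h0 : HasDerivAt (fun x : ℝ => a*x) a x := by simpa using (hasDerivAt_id x).const_mul a
  have h1 : HasDerivAt (fun x : ℝ => b*x) b x := by simpa using (hasDerivAt_id x).const_mul b
  have := (h0.exp.const_mul A).add (h1.exp.const_mul B)
  refine this.congr_deriv ?_
  ring

lemma expcombo_key (A a B b : ℝ) (g : ℝ → ℝ) (t : ℝ) (S : Set ℝ) (hS : S ∈ 𝓝 t)
    (hg : ∀ x ∈ S, g x = A * Real.exp (a*x) + B * Real.exp (b*x)) (m : ℝ) :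
    iteratedDeriv 2 g t + m * deriv g t =
      (A*a*a + m*(A*a)) * Real.exp (a*t) + (B*b*b + m*(B*b)) * Real.exp (b*t) := by
  have hev : g =ᶠ[𝓝 t] fun x => A * Real.exp (a*x) + B * Real.exp (b*x) :=
    Filter.eventuallyEq_of_mem hS hg
  have hd1 : deriv g =ᶠ[𝓝 t] fun x => A*a * Real.exp (a*x) + B*b * Real.exp (b*x) := by
    refine hev.deriv.trans (Filter.Eventually.of_forall fun x => ?_)
    exact (hasDerivAt_expcombo A a B b x).deriv
  have hD1 : deriv g t = A*a * Real.exp (a*t) + B*b * Real.exp (b*t) := hd1.self_of_nhds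
  rw [iteratedDeriv_succ, iteratedDeriv_one, hd1.deriv_eq,
    (hasDerivAt_expcombo (A*a) a (B*b) b t).deriv, hD1]
  ring

/-- Formula (3.17): `g'' + n g' = −(1/√(n²+8)) e^{−(1/2)(n∓√(n²+8))t}` for `t ≶ 0`;
in particular `g'' + n g' < 0` away from the origin. -/
theorem gfun_second_order_formula (n : ℕ) (hn : 2 ≤ n) :
    ∀ t : ℝ, t ≠ 0 →
      (t < 0 →
        iteratedDeriv 2 (gfun n) t + (n : ℝ) * deriv (gfun n) t =
          -(1 / Real.sqrt ((n : ℝ) ^ 2 + 8)) *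
            Real.exp (-(1 / 2) * ((n : ℝ) - Real.sqrt ((n : ℝ) ^ 2 + 8)) * t)) ∧
      (0 < t →
        iteratedDeriv 2 (gfun n) t + (n : ℝ) * deriv (gfun n) t =
          -(1 / Real.sqrt ((n : ℝ) ^ 2 + 8)) *
            Real.exp (-(1 / 2) * ((n : ℝ) + Real.sqrt ((n : ℝ) ^ 2 + 8)) * t)) ∧
      iteratedDeriv 2 (gfun n) t + (n : ℝ) * deriv (gfun n) t < 0 := by
  have hnpos : (0:ℝ) < (n:ℝ) := by
    have : 0 < n := lt_of_lt_of_le two_pos hn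
    exact_mod_cast this
  set s : ℝ := Real.sqrt ((n : ℝ) ^ 2 + 8) with hsdef
  have hspos : 0 < s := Real.sqrt_pos.mpr (by positivity)
  have hs2 : s * s = (n:ℝ)^2 + 8 := Real.mul_self_sqrt (by positivity)
  intro t ht
  rcases lt_or_gt_of_ne ht with h | h
  · -- t < 0
    have key : iteratedDeriv 2 (gfun n) t + (n : ℝ) * deriv (gfun n) t =
        -(1 / s) * Real.exp (-(1 / 2) * ((n : ℝ) - s) * t) := by
      have hkey := expcombo_key (-(1 / (2 * (n:ℝ) * s)) * (n:ℝ)) (-(1/2) * ((n:ℝ) - s))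
        ((1 / (2 * (n:ℝ) * s)) * s) 0 (gfun n) t (Set.Iio 0) (Iio_mem_nhds h)
        (fun x hx => by
          simp only [gfun, if_pos (show x < 0 from hx), ← hsdef]
          rw [zero_mul, Real.exp_zero]
          ring) (n:ℝ)
      rw [hkey]
      have hcoef : (-(1 / (2 * (n:ℝ) * s)) * (n:ℝ)) * (-(1/2) * ((n:ℝ) - s)) * (-(1/2) * ((n:ℝ) - s))
          + (n:ℝ) * ((-(1 / (2 * (n:ℝ) * s)) * (n:ℝ)) * (-(1/2) * ((n:ℝ) - s))) = -(1/s) := by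
        have hs0 : s ≠ 0 := ne_of_gt hspos
        have hn0 : (n:ℝ) ≠ 0 := ne_of_gt hnpos
        field_simp
        linear_combination (-1) * hs2
      rw [hcoef]
      simp
    exact ⟨fun _ => key, fun h' => (lt_asymm h h').elim, by
      rw [key]
      have := Real.exp_pos (-(1 / 2) * ((n : ℝ) - s) * t)
      nlinarith [one_div_pos.mpr hspos]⟩
  · -- t > 0
    have key : iteratedDeriv 2 (gfun n) t + (n : ℝ) * deriv (gfun n) t =
        -(1 / s) * Real.exp (-(1 / 2) * ((n : ℝ) + s) * t) := by
      have hkey := expcombo_key (-(1 / (2 * (n:ℝ) * s)) * (n:ℝ)) (-(1/2) * ((n:ℝ) + s))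
        ((1 / (2 * (n:ℝ) * s)) * s) (-(n:ℝ)) (gfun n) t (Set.Ioi 0) (Ioi_mem_nhds h)
        (fun x hx => by
          simp only [gfun, if_neg (not_lt.mpr (le_of_lt (show (0:ℝ) < x from hx))), ← hsdef]
          ring) (n:ℝ)
      rw [hkey]
      have hcoef : (-(1 / (2 * (n:ℝ) * s)) * (n:ℝ)) * (-(1/2) * ((n:ℝ) + s)) * (-(1/2) * ((n:ℝ) + s))
          + (n:ℝ) * ((-(1 / (2 * (n:ℝ) * s)) * (n:ℝ)) * (-(1/2) * ((n:ℝ) + s))) = -(1/s) := by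
        have hs0 : s ≠ 0 := ne_of_gt hspos
        have hn0 : (n:ℝ) ≠ 0 := ne_of_gt hnpos
        field_simp
        linear_combination (-1) * hs2
      have hcoef2 : ((1 / (2 * (n:ℝ) * s)) * s) * (-(n:ℝ)) * (-(n:ℝ))
          + (n:ℝ) * (((1 / (2 * (n:ℝ) * s)) * s) * (-(n:ℝ))) = 0 := by ring
      rw [hcoef, hcoef2]
      ring
    exact ⟨fun h' => (lt_asymm h h').elim, fun _ => key, by
      rw [key]
      have := Real.exp_pos (-(1 / 2) * ((n : ℝ) + s) * t)
      nlinarith [one_div_pos.mpr hspos]⟩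
end
end

section
/- Let n ≥ 2 and let g be the function defined below. Then (3/2) g'(t) + 2n g(t) ≥ 0 for all t ∈ ℝ \ {0}, and consequently also g'(t) + 2n g(t) ≥ 0 for all t ∈ ℝ \ {0} (using g' ≤ 0). -/
open MeasureTheory Metric Set Filter
open scoped Topology RealInnerProductSpace NNReal ENNReal

noncomputable section

/-! With `s = √(n² + 8) > n`, on each side of the origin `a g' + 2n g` is an explicit numerator
over `4s`: `(1 - e)·4s + e(4 - a)(s - n)` with `e = exp((s - n)t/2) ≤ 1` for `t < 0`, and
`e₁(4 - a)(s - n) + 2(2 - a)s(e₂ - e₁)` with `e₁ = exp(-(n + s)t/2) ≤ e₂ = exp(-nt)` for `t > 0`.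
For `a ≤ 2` every summand is a product of nonnegative factors. -/

lemma gfun_zero : gfun 0 = 0 := by
  funext t
  simp [gfun]

lemma natCast_lt_sqrt_sq_add_eight (n : ℕ) : (n : ℝ) < √((n : ℝ) ^ 2 + 8) :=
  Real.lt_sqrt (Nat.cast_nonneg n) |>.mpr (by linarith)

section

variable {n : ℕ} {t : ℝ}

lemma hasDerivAt_gfun_of_neg (hn : n ≠ 0) (ht : t < 0) :
    HasDerivAt (gfun n)
      ((n - √((n : ℝ) ^ 2 + 8)) / (4 * √((n : ℝ) ^ 2 + 8)) *
        Real.exp (-(1 / 2) * ((n : ℝ) - √((n : ℝ) ^ 2 + 8)) * t)) t := by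
  set s := √((n : ℝ) ^ 2 + 8)
  have hs : s ≠ 0 := (Nat.cast_nonneg n |>.trans_lt (natCast_lt_sqrt_sq_add_eight n)).ne'
  have hg : gfun n =ᶠ[𝓝 t] fun x ↦
      -(1 / (2 * n * s)) * (n * Real.exp (-(1 / 2) * (n - s) * x) - s) := by
    filter_upwards [Iio_mem_nhds ht] with x (hx : x < 0)
    rw [gfun, if_pos hx]
  have h := ((((hasDerivAt_id' t).const_mul (-(1 / 2) * (n - s))).exp.const_mul
    (n : ℝ)).sub_const s).const_mul (-(1 / (2 * n * s)))
  refine (h.congr_deriv ?_).congr_of_eventuallyEq hg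
  field_simp
  ring

lemma hasDerivAt_gfun_of_pos (hn : n ≠ 0) (ht : 0 < t) :
    HasDerivAt (gfun n)
      (((n + √((n : ℝ) ^ 2 + 8)) * Real.exp (-(1 / 2) * ((n : ℝ) + √((n : ℝ) ^ 2 + 8)) * t) -
        2 * √((n : ℝ) ^ 2 + 8) * Real.exp (-(n : ℝ) * t)) / (4 * √((n : ℝ) ^ 2 + 8))) t := by
  set s := √((n : ℝ) ^ 2 + 8)
  have hs : s ≠ 0 := (Nat.cast_nonneg n |>.trans_lt (natCast_lt_sqrt_sq_add_eight n)).ne'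
  have hg : gfun n =ᶠ[𝓝 t] fun x ↦
      -(1 / (2 * n * s)) * (n * Real.exp (-(1 / 2) * (n + s) * x) - s * Real.exp (-n * x)) := by
    filter_upwards [Ioi_mem_nhds ht] with x (hx : 0 < x)
    rw [gfun, if_neg hx.not_gt]
  have h := ((((hasDerivAt_id' t).const_mul (-(1 / 2) * (n + s))).exp.const_mul (n : ℝ)).sub
    (((hasDerivAt_id' t).const_mul (-(n : ℝ))).exp.const_mul s)).const_mul (-(1 / (2 * n * s)))
  refine (h.congr_deriv ?_).congr_of_eventuallyEq hg
  field_simp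
  ring

lemma mul_deriv_gfun_add_nonneg_of_neg (hn : n ≠ 0) (ht : t < 0) {a : ℝ} (ha : a ≤ 4) :
    0 ≤ a * deriv (gfun n) t + 2 * n * gfun n t := by
  set s := √((n : ℝ) ^ 2 + 8) with hs
  set e := Real.exp (-(1 / 2) * ((n : ℝ) - s) * t) with he_def
  have hns : (n : ℝ) < s := natCast_lt_sqrt_sq_add_eight n
  have hn₀ : (0 : ℝ) < n := by positivity
  have he : e ≤ 1 := by
    have : 0 ≤ ((n : ℝ) - s) * t := mul_nonneg_of_nonpos_of_nonpos (by linarith) ht.le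
    exact Real.exp_le_one_iff.mpr (by linarith)
  have key : a * deriv (gfun n) t + 2 * n * gfun n t =
      ((1 - e) * (4 * s) + e * (4 - a) * (s - n)) / (4 * s) := by
    rw [(hasDerivAt_gfun_of_neg hn ht).deriv, gfun, if_pos ht, ← hs, ← he_def]
    field_simp
    ring
  rw [key]
  have h₁ : 0 ≤ (1 - e) * (4 * s) := mul_nonneg (by linarith) (by linarith)
  have h₂ : 0 ≤ e * (4 - a) * (s - n) :=
    mul_nonneg (mul_nonneg (Real.exp_pos _).le (by linarith)) (by linarith)
  exact div_nonneg (add_nonneg h₁ h₂) (by linarith)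

lemma mul_deriv_gfun_add_nonneg_of_pos (hn : n ≠ 0) (ht : 0 < t) {a : ℝ} (ha : a ≤ 2) :
    0 ≤ a * deriv (gfun n) t + 2 * n * gfun n t := by
  set s := √((n : ℝ) ^ 2 + 8) with hs
  set e₁ := Real.exp (-(1 / 2) * ((n : ℝ) + s) * t) with he₁
  set e₂ := Real.exp (-(n : ℝ) * t) with he₂
  have hns : (n : ℝ) < s := natCast_lt_sqrt_sq_add_eight n
  have hn₀ : (0 : ℝ) < n := by positivity
  have he : e₁ ≤ e₂ := Real.exp_le_exp.mpr (by nlinarith [mul_pos (sub_pos.mpr hns) ht])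
  have key : a * deriv (gfun n) t + 2 * n * gfun n t =
      (e₁ * (4 - a) * (s - n) + 2 * (2 - a) * s * (e₂ - e₁)) / (4 * s) := by
    rw [(hasDerivAt_gfun_of_pos hn ht).deriv, gfun, if_neg ht.not_gt, ← hs, ← he₁, ← he₂]
    field_simp
    ring
  rw [key]
  have h₁ : 0 ≤ e₁ * (4 - a) * (s - n) :=
    mul_nonneg (mul_nonneg (Real.exp_pos _).le (by linarith)) (by linarith)
  have h₂ : 0 ≤ 2 * (2 - a) * s * (e₂ - e₁) :=
    mul_nonneg (mul_nonneg (by linarith) (by linarith)) (by linarith)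
  exact div_nonneg (add_nonneg h₁ h₂) (by linarith)

theorem mul_deriv_gfun_add_nonneg {a : ℝ} (ha : a ≤ 2) (ht : t ≠ 0) :
    0 ≤ a * deriv (gfun n) t + 2 * n * gfun n t := by
  rcases eq_or_ne n 0 with rfl | hn
  · simp [gfun_zero]
  rcases ht.lt_or_gt with ht | ht
  · exact mul_deriv_gfun_add_nonneg_of_neg hn ht (by linarith)
  · exact mul_deriv_gfun_add_nonneg_of_pos hn ht ha

end

theorem gfun_positive_combinations_general (n : ℕ) :
    (∀ t : ℝ, t ≠ 0 → 0 ≤ (3 / 2) * deriv (gfun n) t + 2 * (n : ℝ) * gfun n t) ∧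
    (∀ t : ℝ, t ≠ 0 → 0 ≤ deriv (gfun n) t + 2 * (n : ℝ) * gfun n t) :=
  ⟨fun _ ht ↦ mul_deriv_gfun_add_nonneg (by norm_num) ht,
    fun _ ht ↦ by simpa using mul_deriv_gfun_add_nonneg (a := 1) (by norm_num) ht⟩

/-- `(3/2) g' + 2n g ≥ 0` away from the origin, and consequently (using `g' ≤ 0`)
`g' + 2n g ≥ 0` away from the origin. -/
theorem gfun_positive_combinations (n : ℕ) (hn : 2 ≤ n) :
    (∀ t : ℝ, t ≠ 0 → 0 ≤ (3 / 2) * deriv (gfun n) t + 2 * (n : ℝ) * gfun n t) ∧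
    (∀ t : ℝ, t ≠ 0 → 0 ≤ deriv (gfun n) t + 2 * (n : ℝ) * gfun n t) :=
  gfun_positive_combinations_general n
end
end
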